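/- arXiv:2406.02813 — 2 statements merged into one kernel-verified Lean document; each statement's English description precedes it below -/
import Mathlib

section
/- Let $a, b, C > 0$, $c > 1$, and let $(W_k)_{k\ge 0}$ be a sequence of nonnegative reals with $W_0 > 0$ satisfying $W_k \le C 2^{ak} K^{-b} W_{k-1}^{c}$ for all $k \ge 1$. If $K \ge (C 2^{ac/(c-1)} W_0^{c-1})^{1/b}$, then $W_k \le W_0 (2^{-a/(c-1)})^k$ for all $k \ge 1$. -/
open Real

/-- De Giorgi iteration lemma: geometric decay under a superlinear recursion. -/
theorem stmt0 (a b C c K : ℝ) (ha : 0 < a) (hb : 0 < b) (hC : 0 < C) (hc : 1 < c)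
    (hK : 0 < K) (W : ℕ → ℝ) (hWnn : ∀ k, 0 ≤ W k) (hW0 : 0 < W 0)
    (hrec : ∀ k ≥ 1, W k ≤ C * 2 ^ (a * k) * K ^ (-b) * W (k - 1) ^ c)
    (hKlarge : K ≥ (C * 2 ^ (a * c / (c - 1)) * W 0 ^ (c - 1)) ^ (1 / b)) :
    ∀ k ≥ 1, W k ≤ W 0 * (2 ^ (-(a / (c - 1)))) ^ k := by
  have h2 : (0:ℝ) < 2 := two_pos
  have hc1 : (0:ℝ) < c - 1 := by linarith
  have hX : 0 < C * 2 ^ (a * c / (c - 1)) * W 0 ^ (c - 1) := by positivity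
  have hKb : C * 2 ^ (a * c / (c - 1)) * W 0 ^ (c - 1) ≤ K ^ b := by
    have h := Real.rpow_le_rpow (Real.rpow_nonneg hX.le _) hKlarge hb.le
    rwa [← Real.rpow_mul hX.le, one_div, inv_mul_cancel₀ hb.ne', Real.rpow_one] at h
  have hKinv : K ^ (-b) ≤ (C * 2 ^ (a * c / (c - 1)) * W 0 ^ (c - 1))⁻¹ := by
    rw [Real.rpow_neg hK.le]
    gcongr
  have main : ∀ k : ℕ, W k ≤ W 0 * (2 ^ (-(a / (c - 1)))) ^ k := by
    intro k
    induction k with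
    | zero => simp
    | succ n ih =>
      have h1 := hrec (n+1) (Nat.le_add_left 1 n)
      simp only [Nat.add_sub_cancel] at h1
      have hstep : W (n+1) ≤ C * 2 ^ (a * (↑n+1)) *
          (C * 2 ^ (a * c / (c - 1)) * W 0 ^ (c - 1))⁻¹ *
          (W 0 * (2 ^ (-(a / (c - 1)))) ^ n) ^ c := by
        calc W (n+1) ≤ C * 2 ^ (a * ↑(n+1)) * K ^ (-b) * W n ^ c := h1
          _ ≤ _ := by
            push_cast
            have hWc : W n ^ c ≤ (W 0 * (2 ^ (-(a / (c - 1)))) ^ n) ^ c :=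
              Real.rpow_le_rpow (hWnn n) ih (by linarith)
            have hfirst : C * 2 ^ (a * (↑n+1)) * K ^ (-b) ≤
                C * 2 ^ (a * (↑n+1)) * (C * 2 ^ (a * c / (c - 1)) * W 0 ^ (c - 1))⁻¹ := by
              gcongr
            exact mul_le_mul hfirst hWc (Real.rpow_nonneg (hWnn n) c) (by positivity)
      refine hstep.trans (le_of_eq ?_)
      push_cast
      rw [← Real.rpow_natCast ((2:ℝ) ^ (-(a / (c - 1)))) n, ← Real.rpow_mul h2.le,
        Real.mul_rpow hW0.le (Real.rpow_nonneg h2.le _), ← Real.rpow_mul h2.le,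
        pow_succ, ← Real.rpow_natCast ((2:ℝ) ^ (-(a / (c - 1)))) n, ← Real.rpow_mul h2.le]
      rw [show C = Real.exp (Real.log C) from (Real.exp_log hC).symm]
      simp only [Real.rpow_def_of_pos h2, Real.rpow_def_of_pos hW0, ← Real.exp_add,
        mul_inv, ← Real.exp_neg]
      rw [← Real.exp_log hW0, ← Real.exp_add]
      simp only [Real.log_exp]
      rw [Real.exp_eq_exp]
      field_simp
      ring
  intro k hk
  exact main k
end

section
/- Let $a, b, C > 0$, $1 < c_1 \le c_2$, and let $(W_k)_{k\ge 0}$ be nonnegative reals with $W_0 > 0$ satisfying $W_k \le C 2^{ak} K^{-b}(W_{k-1}^{c_1} + W_{k-1}^{c_2})$ for all $k \ge 1$. If $K^b \ge \max\{C 2^{c_2 + a c_1/(c_1-1)} W_0^{c_1+c_2-2},\; C 2^{1 + a c_1/(c_1-1)} W_0^{c_1-1}\}$, then $W_k \le W_0 (2^{-a/(c_1-1)})^k$ for all $k \ge 1$. -/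
open Real

set_option maxHeartbeats 1000000 in
/-- Generalized De Giorgi iteration lemma with two superlinear terms. -/
theorem stmt1 (a b C c₁ c₂ K : ℝ) (ha : 0 < a) (hb : 0 < b) (hC : 0 < C)
    (hc₁ : 1 < c₁) (hc₁₂ : c₁ ≤ c₂) (hK : 0 < K)
    (W : ℕ → ℝ) (hWnn : ∀ k, 0 ≤ W k) (hW0 : 0 < W 0)
    (hrec : ∀ k ≥ 1, W k ≤ C * 2 ^ (a * k) * K ^ (-b) * (W (k - 1) ^ c₁ + W (k - 1) ^ c₂))
    (hKlarge : K ^ b ≥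
      max (C * 2 ^ (c₂ + a * c₁ / (c₁ - 1)) * W 0 ^ (c₁ + c₂ - 2))
          (C * 2 ^ (1 + a * c₁ / (c₁ - 1)) * W 0 ^ (c₁ - 1))) :
    ∀ k ≥ 1, W k ≤ W 0 * (2 ^ (-(a / (c₁ - 1)))) ^ k := by
  set s := a / (c₁ - 1) with hs
  have hc1 : (0:ℝ) < c₁ - 1 := by linarith
  have hspos : 0 < s := div_pos ha hc1
  have hKb : (0:ℝ) < K ^ b := rpow_pos_of_pos hK b
  have hc₁0 : (0:ℝ) < c₁ := by linarith
  have hc₂0 : (0:ℝ) < c₂ := by linarith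
  have hscdef : a * c₁ / (c₁ - 1) = s * c₁ := by rw [hs]; ring
  rw [hscdef] at hKlarge
  have hrn : ∀ n : ℕ, ((2:ℝ) ^ (-s)) ^ n = (2:ℝ) ^ (-(s * n)) := by
    intro n
    rw [← Real.rpow_natCast ((2:ℝ) ^ (-s)) n, ← Real.rpow_mul (by norm_num)]
    ring_nf
  have hmain : ∀ n : ℕ, W n ≤ W 0 * ((2:ℝ) ^ (-s)) ^ n := by
    intro n
    induction n with
    | zero => simp
    | succ j IH =>
      have hrjpos : (0:ℝ) < ((2:ℝ) ^ (-s)) ^ (j+1) :=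
        pow_pos (rpow_pos_of_pos two_pos _) _
      have h1 := hrec (j+1) (Nat.le_add_left 1 j)
      simp only [Nat.add_sub_cancel] at h1
      push_cast at h1
      by_cases hWj : W j = 0
      · rw [hWj, Real.zero_rpow (ne_of_gt hc₁0), Real.zero_rpow (ne_of_gt hc₂0)] at h1
        simp at h1
        nlinarith [mul_pos hW0 hrjpos]
      · have hWjpos : 0 < W j := lt_of_le_of_ne (hWnn j) (Ne.symm hWj)
        have hrj : ((2:ℝ) ^ (-s)) ^ j = (2:ℝ) ^ (-(s * (j:ℝ))) := hrn j
        have hrjnn : (0:ℝ) ≤ ((2:ℝ) ^ (-s)) ^ j := by positivity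
        -- the two cases give a bound of the same shape
        have hmid : ∃ M : ℝ, 0 ≤ M ∧
            W j ^ c₁ + W j ^ c₂ ≤ 2 * (M * (2:ℝ) ^ (-(s * (j:ℝ)) * c₁)) ∧
            2 * C * (2:ℝ) ^ (s * c₁) * M ≤ K ^ b * W 0 := by
          by_cases hle1 : W j ≤ 1
          · refine ⟨W 0 ^ c₁, by positivity, ?_, ?_⟩
            · have h2 : W j ^ c₂ ≤ W j ^ c₁ :=
                Real.rpow_le_rpow_of_exponent_ge hWjpos hle1 hc₁₂
              have h3 : W j ^ c₁ ≤ (W 0 * ((2:ℝ) ^ (-s)) ^ j) ^ c₁ :=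
                Real.rpow_le_rpow (hWnn j) IH hc₁0.le
              have h4 : (W 0 * ((2:ℝ) ^ (-s)) ^ j) ^ c₁
                  = W 0 ^ c₁ * (2:ℝ) ^ (-(s * (j:ℝ)) * c₁) := by
                rw [Real.mul_rpow hW0.le hrjnn, hrj, ← Real.rpow_mul (by norm_num)]
              nlinarith
            · have hmaxR : C * (2:ℝ) ^ (1 + s * c₁) * W 0 ^ (c₁ - 1) ≤ K ^ b :=
                le_trans (le_max_right _ _) hKlarge
              have e1 : (2:ℝ) ^ (1 + s * c₁) = 2 * (2:ℝ) ^ (s * c₁) := by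
                rw [Real.rpow_add two_pos, Real.rpow_one]
              have e2 : W 0 ^ (c₁ - 1) * W 0 = W 0 ^ c₁ := by
                rw [← Real.rpow_add_one (ne_of_gt hW0) (c₁ - 1)]
                norm_num
              calc 2 * C * (2:ℝ) ^ (s * c₁) * W 0 ^ c₁
                  = (C * (2:ℝ) ^ (1 + s * c₁) * W 0 ^ (c₁ - 1)) * W 0 := by
                    rw [e1, ← e2]; ring
                _ ≤ K ^ b * W 0 := mul_le_mul_of_nonneg_right hmaxR hW0.le
          · push_neg at hle1
            have hrle1 : (2:ℝ) ^ (-s) ≤ 1 :=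
              Real.rpow_le_one_of_one_le_of_nonpos (by norm_num) (by linarith)
            have hrj1 : ((2:ℝ) ^ (-s)) ^ j ≤ 1 :=
              pow_le_one₀ (by positivity) hrle1
            have hW0gt1 : 1 < W 0 := by nlinarith
            refine ⟨W 0 ^ c₂, by positivity, ?_, ?_⟩
            · have h2 : W j ^ c₁ ≤ W j ^ c₂ :=
                Real.rpow_le_rpow_of_exponent_le hle1.le hc₁₂
              have h3 : W j ^ c₂ ≤ (W 0 * ((2:ℝ) ^ (-s)) ^ j) ^ c₂ :=
                Real.rpow_le_rpow (hWnn j) IH hc₂0.le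
              have h4 : (W 0 * ((2:ℝ) ^ (-s)) ^ j) ^ c₂
                  = W 0 ^ c₂ * (2:ℝ) ^ (-(s * (j:ℝ)) * c₂) := by
                rw [Real.mul_rpow hW0.le hrjnn, hrj, ← Real.rpow_mul (by norm_num)]
              have h5 : (2:ℝ) ^ (-(s * (j:ℝ)) * c₂) ≤ (2:ℝ) ^ (-(s * (j:ℝ)) * c₁) := by
                apply Real.rpow_le_rpow_of_exponent_le (by norm_num)
                have hsj : (0:ℝ) ≤ s * (j:ℝ) := by positivity
                nlinarith
              have hW0c₂ : (0:ℝ) ≤ W 0 ^ c₂ := by positivity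
              nlinarith
            · have hmaxL : C * (2:ℝ) ^ (c₂ + s * c₁) * W 0 ^ (c₁ + c₂ - 2) ≤ K ^ b :=
                le_trans (le_max_left _ _) hKlarge
              have e1 : (2:ℝ) ^ (c₂ + s * c₁) = (2:ℝ) ^ c₂ * (2:ℝ) ^ (s * c₁) :=
                Real.rpow_add two_pos _ _
              have e2 : W 0 ^ (c₁ + c₂ - 2) = W 0 ^ (c₁ - 1) * W 0 ^ (c₂ - 1) := by
                rw [← Real.rpow_add hW0]; ring_nf
              have e3 : W 0 ^ (c₂ - 1) * W 0 = W 0 ^ c₂ := by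
                rw [← Real.rpow_add_one (ne_of_gt hW0) (c₂ - 1)]
                norm_num
              have h2c : (2:ℝ) ≤ (2:ℝ) ^ c₂ := by
                calc (2:ℝ) = (2:ℝ) ^ (1:ℝ) := (Real.rpow_one 2).symm
                  _ ≤ (2:ℝ) ^ c₂ :=
                    Real.rpow_le_rpow_of_exponent_le (by norm_num) (by linarith)
              have hW0c1 : 1 ≤ W 0 ^ (c₁ - 1) := by
                have h := Real.rpow_le_rpow_of_exponent_le hW0gt1.le
                  (show (0:ℝ) ≤ c₁ - 1 by linarith)
                rwa [Real.rpow_zero] at h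
              have hP : (0:ℝ) < C * (2:ℝ) ^ (s * c₁) * W 0 ^ (c₂ - 1) * W 0 := by positivity
              have h2' : (2:ℝ) ≤ (2:ℝ) ^ c₂ * W 0 ^ (c₁ - 1) := by
                calc (2:ℝ) = 2 * 1 := by ring
                  _ ≤ (2:ℝ) ^ c₂ * W 0 ^ (c₁ - 1) :=
                    mul_le_mul h2c hW0c1 zero_le_one (by positivity)
              calc 2 * C * (2:ℝ) ^ (s * c₁) * W 0 ^ c₂
                  = 2 * (C * (2:ℝ) ^ (s * c₁) * W 0 ^ (c₂ - 1) * W 0) := by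
                    rw [← e3]; ring
                _ ≤ ((2:ℝ) ^ c₂ * W 0 ^ (c₁ - 1)) * (C * (2:ℝ) ^ (s * c₁) * W 0 ^ (c₂ - 1) * W 0) :=
                    mul_le_mul_of_nonneg_right h2' hP.le
                _ = (C * (2:ℝ) ^ (c₂ + s * c₁) * W 0 ^ (c₁ + c₂ - 2)) * W 0 := by
                    rw [e1, e2]; ring
                _ ≤ K ^ b * W 0 := mul_le_mul_of_nonneg_right hmaxL hW0.le
        obtain ⟨M, hM, hbound, hkey⟩ := hmid
        have hKinv : K ^ (-b) = (K ^ b)⁻¹ := Real.rpow_neg hK.le b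
        have hcoef : (0:ℝ) ≤ C * 2 ^ (a * ((j:ℝ) + 1)) * K ^ (-b) := by
          rw [hKinv]; positivity
        have step1 : W (j+1) ≤ C * 2 ^ (a * ((j:ℝ) + 1)) * K ^ (-b)
            * (2 * (M * (2:ℝ) ^ (-(s * (j:ℝ)) * c₁))) :=
          h1.trans (mul_le_mul_of_nonneg_left hbound hcoef)
        have hexp : a * ((j:ℝ) + 1) + (-(s * (j:ℝ)) * c₁) = s * c₁ + (-(s * ((j:ℝ) + 1))) := by
          rw [hs]; field_simp; ring
        have h2eq : (2:ℝ) ^ (a * ((j:ℝ) + 1)) * (2:ℝ) ^ (-(s * (j:ℝ)) * c₁)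
            = (2:ℝ) ^ (s * c₁) * (2:ℝ) ^ (-(s * ((j:ℝ) + 1))) := by
          rw [← Real.rpow_add two_pos, ← Real.rpow_add two_pos, hexp]
        have hY : (0:ℝ) < (2:ℝ) ^ (-(s * ((j:ℝ) + 1))) := rpow_pos_of_pos two_pos _
        have final : C * 2 ^ (a * ((j:ℝ) + 1)) * K ^ (-b)
            * (2 * (M * (2:ℝ) ^ (-(s * (j:ℝ)) * c₁)))
            ≤ W 0 * (2:ℝ) ^ (-(s * ((j:ℝ) + 1))) := by
          rw [hKinv]
          have e4 : C * 2 ^ (a * ((j:ℝ) + 1)) * (K ^ b)⁻¹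
              * (2 * (M * (2:ℝ) ^ (-(s * (j:ℝ)) * c₁)))
              = (2 * C * (2:ℝ) ^ (s * c₁) * M) * (2:ℝ) ^ (-(s * ((j:ℝ) + 1))) * (K ^ b)⁻¹ := by
            calc C * 2 ^ (a * ((j:ℝ) + 1)) * (K ^ b)⁻¹
                * (2 * (M * (2:ℝ) ^ (-(s * (j:ℝ)) * c₁)))
                = C * ((2:ℝ) ^ (a * ((j:ℝ) + 1)) * (2:ℝ) ^ (-(s * (j:ℝ)) * c₁)) * (K ^ b)⁻¹
                  * (2 * M) := by ring
              _ = C * ((2:ℝ) ^ (s * c₁) * (2:ℝ) ^ (-(s * ((j:ℝ) + 1)))) * (K ^ b)⁻¹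
                  * (2 * M) := by rw [h2eq]
              _ = (2 * C * (2:ℝ) ^ (s * c₁) * M) * (2:ℝ) ^ (-(s * ((j:ℝ) + 1))) * (K ^ b)⁻¹ := by
                  ring
          rw [e4]
          have h5 : (2 * C * (2:ℝ) ^ (s * c₁) * M) * (2:ℝ) ^ (-(s * ((j:ℝ) + 1))) * (K ^ b)⁻¹
              ≤ (K ^ b * W 0) * (2:ℝ) ^ (-(s * ((j:ℝ) + 1))) * (K ^ b)⁻¹ := by
            have := mul_le_mul_of_nonneg_right
              (mul_le_mul_of_nonneg_right hkey hY.le) (inv_nonneg.mpr hKb.le)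
            exact this
          have h6 : (K ^ b * W 0) * (2:ℝ) ^ (-(s * ((j:ℝ) + 1))) * (K ^ b)⁻¹
              = W 0 * (2:ℝ) ^ (-(s * ((j:ℝ) + 1))) := by
            field_simp
          linarith [h5, h6.le]
        have hfin : W 0 * (2:ℝ) ^ (-(s * ((j:ℝ) + 1))) = W 0 * ((2:ℝ) ^ (-s)) ^ (j+1) := by
          rw [hrn (j+1)]
          push_cast
          ring_nf
        linarith [step1, final, hfin.le]
  intro k _
  exact hmain k
end
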